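/- arXiv:2605.20629 — 2 statements merged into one kernel-verified Lean document; each statement's English description precedes it below -/
import Mathlib

section
/- Let D be a maximal ASPD on a finite set A with n = |A| ≥ 3, and let a_1, a_2 be its two bottom alternatives. For {i,j} = {1,2} define D_i := {ω_{A∖{a_i}} : ω ∈ D, ω(n) = a_i} and D_{ij} := {ω_{A∖{a_i,a_j}} : ω ∈ D, ω(n) = a_i, ω(n−1) = a_j}. Then D_1, D_2, D_{12}, D_{21} are maximal ASPDs (on A∖{a_1}, A∖{a_2}, A∖{a_1,a_2}, and A∖{a_1,a_2}, respectively), and D_{12} = D_{21}. -/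
/-!
Choose for every triple `T ⊆ A` a witness `x T` that `D` never ranks last on `T`. By maximality,
`D` is exactly the set of preferences on `A` that never rank `x T` last on `T`. A bottom
alternative of `D` is never the witness of a triple containing it, so appending `a` (or `a₂ a₁`)
to a preference on `A ∖ {a}` (or `A ∖ {a₁, a₂}`) neither creates nor removes a violation. Hence
`D_i` and `D_ij` are the sets of preferences on the smaller sets compatible with the same
witnesses, which gives `D₁₂ = D₂₁`; and a preference that could be added to one of them could,
with the bottom alternatives appended, be added to `D`.
-/

variable {α : Type*} [DecidableEq α]

/-- Preferences (linear orders written as lists, most preferred first) on `A`. -/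
def PrefOn (A : Finset α) : Set (List α) :=
  {l | l.Nodup ∧ l.toFinset = A}

/-- Restriction of a preference to a subset `T`. -/
def restrictPref (l : List α) (T : Finset α) : List α :=
  l.filter (fun a => decide (a ∈ T))

/-- Arrow's single-peaked domain on `A`: for every triple `T ⊆ A` some `x ∈ T`
is never ranked last in the restriction of the domain to `T`. -/
def IsASPD (A : Finset α) (D : Set (List α)) : Prop :=
  D ⊆ PrefOn A ∧
    ∀ T : Finset α, T ⊆ A → T.card = 3 →
      ∃ x ∈ T, ∀ l ∈ D, (restrictPref l T).getLast? ≠ some x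

/-- Maximal Arrow's single-peaked domain on `A`. -/
def IsMaximalASPD (A : Finset α) (D : Set (List α)) : Prop :=
  IsASPD A D ∧ ∀ l ∈ PrefOn A, l ∉ D → ¬ IsASPD A (insert l D)

/-- The domain `D_i` obtained from `D` by restricting the preferences ending in
the bottom alternative `a` to `A ∖ {a}`. -/
def bottomRestrict (A : Finset α) (D : Set (List α)) (a : α) : Set (List α) :=
  {m | ∃ l ∈ D, l.getLast? = some a ∧ m = restrictPref l (A.erase a)}

/-- The domain `D_{ij}` obtained from `D` by restricting the preferences with
last alternative `a₁` and second-to-last alternative `a₂` to `A ∖ {a₁, a₂}`. -/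
def bottom2Restrict (A : Finset α) (D : Set (List α)) (a₁ a₂ : α) : Set (List α) :=
  {m | ∃ l ∈ D, l.getLast? = some a₁ ∧ l[A.card - 2]? = some a₂ ∧
    m = restrictPref l (A \ {a₁, a₂})}


theorem restrictPref_append (l l' : List α) (T : Finset α) :
    restrictPref (l ++ l') T = restrictPref l T ++ restrictPref l' T :=
  List.filter_append _ _

theorem restrictPref_restrictPref {S T : Finset α} (hST : S ⊆ T) (l : List α) :
    restrictPref (restrictPref l T) S = restrictPref l S := by
  unfold restrictPref
  rw [List.filter_filter]
  refine List.filter_congr fun a _ => ?_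
  by_cases h : a ∈ S
  · simp [h, hST h]
  · simp [h]

theorem restrictPref_eq_self {l : List α} {T : Finset α} (h : ∀ a ∈ l, a ∈ T) :
    restrictPref l T = l :=
  List.filter_eq_self.mpr (by simpa using h)

theorem restrictPref_eq_nil {l : List α} {T : Finset α} (h : ∀ a ∈ l, a ∉ T) :
    restrictPref l T = [] :=
  List.filter_eq_nil_iff.mpr (by simpa using h)

theorem mem_of_mem_prefOn {A : Finset α} {l : List α} (hl : l ∈ PrefOn A) {a : α} (ha : a ∈ l) :
    a ∈ A :=
  hl.2 ▸ List.mem_toFinset.mpr ha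

theorem restrictPref_mem_prefOn {A B : Finset α} (hBA : B ⊆ A) {l : List α}
    (hl : l ∈ PrefOn A) : restrictPref l B ∈ PrefOn B := by
  refine ⟨hl.1.filter _, ?_⟩
  ext a
  simp only [restrictPref, List.mem_toFinset, List.mem_filter, decide_eq_true_eq]
  exact ⟨fun h => h.2, fun h => ⟨List.mem_toFinset.mp (hl.2.symm ▸ hBA h), h⟩⟩

theorem PrefOn.length_eq {A : Finset α} {l : List α} (hl : l ∈ PrefOn A) : l.length = A.card := by
  rw [← hl.2, List.toFinset_card_of_nodup hl.1]

theorem append_mem_prefOn_iff {A B : Finset α} {s m : List α} (hBA : B ⊆ A) (hs : s.Nodup)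
    (hsB : s.toFinset = A \ B) : m ++ s ∈ PrefOn A ↔ m ∈ PrefOn B := by
  simp only [PrefOn, Set.mem_ofPred_eq, List.nodup_append, List.toFinset_append, hsB]
  constructor
  · rintro ⟨⟨hm, -, hdisj⟩, hA⟩
    refine ⟨hm, ?_⟩
    ext b
    grind [List.mem_toFinset]
  · rintro ⟨hm, hmB⟩
    refine ⟨⟨hm, hs, ?_⟩, by rw [hmB, Finset.union_sdiff_of_subset hBA]⟩
    rintro a ha b hb rfl
    have hbAB : a ∈ A \ B := hsB ▸ List.mem_toFinset.mpr hb
    exact (Finset.mem_sdiff.mp hbAB).2 (hmB ▸ List.mem_toFinset.mpr ha)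

theorem List.exists_eq_append_pair_iff {β : Type*} {l : List β} {a₁ a₂ : β} (hne : a₁ ≠ a₂) :
    (∃ m, l = m ++ [a₂, a₁]) ↔ l.getLast? = some a₁ ∧ l[l.length - 2]? = some a₂ := by
  constructor
  · rintro ⟨m, rfl⟩
    simp
  · rintro ⟨hlast, hsec⟩
    obtain ⟨m', rfl⟩ := List.getLast?_eq_some_iff.mp hlast
    rcases m'.eq_nil_or_concat with rfl | ⟨m, b, rfl⟩
    · simp [hne] at hsec
    · exact ⟨m, by simpa using hsec⟩

theorem restrictPref_append_of_forall_notMem (l : List α) {s : List α} {T : Finset α}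
    (hs : ∀ a ∈ s, a ∉ T) : restrictPref (l ++ s) T = restrictPref l T := by
  rw [restrictPref_append, restrictPref_eq_nil hs, List.append_nil]

theorem exists_getLast?_restrictPref_append_eq (l : List α) {s : List α} {T : Finset α} {a : α}
    (has : a ∈ s) (haT : a ∈ T) :
    ∃ b ∈ s, b ∈ T ∧ (restrictPref (l ++ s) T).getLast? = some b := by
  have hne : restrictPref s T ≠ [] :=
    List.ne_nil_of_mem (List.mem_filter.mpr ⟨has, by simpa using haT⟩)
  obtain ⟨b, hb⟩ := Option.ne_none_iff_exists'.mp (List.getLast?_eq_none_iff.not.mpr hne)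
  have hbs := List.mem_filter.mp (List.mem_of_getLast? hb)
  exact ⟨b, hbs.1, by simpa using hbs.2, by
    rw [restrictPref_append, List.getLast?_append_of_ne_nil _ hne, hb]⟩

theorem getLast?_restrictPref_of_getLast? {l : List α} {T : Finset α} {a : α}
    (hla : l.getLast? = some a) (haT : a ∈ T) : (restrictPref l T).getLast? = some a := by
  obtain ⟨m, rfl⟩ := List.getLast?_eq_some_iff.mp hla
  obtain ⟨b, hb, -, hlast⟩ :=
    exists_getLast?_restrictPref_append_eq m (List.mem_singleton_self a) haT
  rwa [List.mem_singleton.mp hb] at hlast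

def compatPrefs (x : Finset α → α) (B : Finset α) : Set (List α) :=
  {m | m ∈ PrefOn B ∧ ∀ S ⊆ B, S.card = 3 → (restrictPref m S).getLast? ≠ some (x S)}

section compatPrefs

variable {x : Finset α → α} {A B : Finset α}

theorem isASPD_compatPrefs (hx : ∀ T ⊆ B, T.card = 3 → x T ∈ T) :
    IsASPD B (compatPrefs x B) :=
  ⟨fun _ hm => hm.1, fun T hT hc => ⟨x T, hx T hT hc, fun _ hm => hm.2 T hT hc⟩⟩

theorem restrictPref_mem_compatPrefs (hBA : B ⊆ A) {l : List α} (hl : l ∈ compatPrefs x A) :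
    restrictPref l B ∈ compatPrefs x B := by
  refine ⟨restrictPref_mem_prefOn hBA hl.1, fun S hS hc => ?_⟩
  rw [restrictPref_restrictPref hS]
  exact hl.2 S (hS.trans hBA) hc

theorem IsMaximalASPD.eq_compatPrefs {D : Set (List α)} (hD : IsMaximalASPD A D)
    (hxT : ∀ T ⊆ A, T.card = 3 → x T ∈ T)
    (hxD : ∀ T ⊆ A, T.card = 3 → ∀ l ∈ D, (restrictPref l T).getLast? ≠ some (x T)) :
    D = compatPrefs x A := by
  refine Set.Subset.antisymm (fun l hl => ⟨hD.1.1 hl, fun S hS hc => hxD S hS hc l hl⟩)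
    fun l hl => ?_
  by_contra hlD
  refine hD.2 l hl.1 hlD ⟨Set.insert_subset hl.1 hD.1.1, fun T hT hc => ⟨x T, hxT T hT hc, ?_⟩⟩
  rintro l' (rfl | hl')
  · exact hl.2 T hT hc
  · exact hxD T hT hc l' hl'

structure IsBottomTail (x : Finset α → α) (A B : Finset α) (s : List α) : Prop where
  subset : B ⊆ A
  nodup : s.Nodup
  toFinset_eq : s.toFinset = A \ B
  ne_witness : ∀ a ∈ s, ∀ T ⊆ A, T.card = 3 → a ∈ T → x T ≠ a

namespace IsBottomTail

variable {s : List α}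

theorem notMem (h : IsBottomTail x A B s) {a : α} (ha : a ∈ s) : a ∉ B :=
  (Finset.mem_sdiff.mp (h.toFinset_eq ▸ List.mem_toFinset.mpr ha)).2

theorem restrictPref_append_of_subset (h : IsBottomTail x A B s) (m : List α) {T : Finset α}
    (hTB : T ⊆ B) : restrictPref (m ++ s) T = restrictPref m T :=
  restrictPref_append_of_forall_notMem m fun _ ha haT => h.notMem ha (hTB haT)

theorem getLast?_restrictPref_append_ne (h : IsBottomTail x A B s) (m : List α) {T : Finset α}
    (hT : T ⊆ A) (hc : T.card = 3) (hTB : ¬T ⊆ B) :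
    (restrictPref (m ++ s) T).getLast? ≠ some (x T) := by
  obtain ⟨a, haT, haB⟩ := Finset.not_subset.mp hTB
  have has : a ∈ s := List.mem_toFinset.mp (h.toFinset_eq ▸ Finset.mem_sdiff.mpr ⟨hT haT, haB⟩)
  obtain ⟨b, hbs, hbT, hb⟩ := exists_getLast?_restrictPref_append_eq m has haT
  rw [hb]
  exact fun e => h.ne_witness b hbs T hT hc hbT (Option.some_inj.mp e).symm

theorem append_mem_compatPrefs_iff (h : IsBottomTail x A B s) {m : List α} :
    m ++ s ∈ compatPrefs x A ↔ m ∈ compatPrefs x B := by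
  refine and_congr (append_mem_prefOn_iff h.subset h.nodup h.toFinset_eq)
    ⟨fun hA S hS hc => ?_, fun hB T hT hc => ?_⟩
  · rw [← h.restrictPref_append_of_subset m hS]
    exact hA S (hS.trans h.subset) hc
  · by_cases hTB : T ⊆ B
    · rw [h.restrictPref_append_of_subset m hTB]
      exact hB T hTB hc
    · exact h.getLast?_restrictPref_append_ne m hT hc hTB

theorem restrictPref_append (h : IsBottomTail x A B s) {m : List α} (hm : m ∈ PrefOn B) :
    restrictPref (m ++ s) B = m := by
  rw [h.restrictPref_append_of_subset m subset_rfl,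
    restrictPref_eq_self fun _ ha => mem_of_mem_prefOn hm ha]

theorem exists_append_iff (h : IsBottomTail x A B s) {m : List α} :
    (∃ m', m' ++ s ∈ compatPrefs x A ∧ m = restrictPref (m' ++ s) B) ↔ m ∈ compatPrefs x B := by
  constructor
  · rintro ⟨m', hm', rfl⟩
    have hm'B := h.append_mem_compatPrefs_iff.mp hm'
    rwa [h.restrictPref_append hm'B.1]
  · exact fun hm => ⟨m, h.append_mem_compatPrefs_iff.mpr hm, (h.restrictPref_append hm.1).symm⟩

/-- If `m` could be added to `compatPrefs x B`, then `m ++ s` could be added to `compatPrefs x A`: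
triples inside `B` take the witnesses of the enlarged domain, the others keep `x`. -/
theorem isMaximalASPD (h : IsBottomTail x A B s) (hmax : IsMaximalASPD A (compatPrefs x A))
    (hxT : ∀ T ⊆ A, T.card = 3 → x T ∈ T) : IsMaximalASPD B (compatPrefs x B) := by
  refine ⟨isASPD_compatPrefs fun T hT => hxT T (hT.trans h.subset), fun m hm hmx hE => ?_⟩
  have hms : m ++ s ∈ PrefOn A := (append_mem_prefOn_iff h.subset h.nodup h.toFinset_eq).mpr hm
  refine hmax.2 (m ++ s) hms (mt h.append_mem_compatPrefs_iff.mp hmx)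
    ⟨Set.insert_subset hms hmax.1.1, fun T hT hc => ?_⟩
  by_cases hTB : T ⊆ B
  · obtain ⟨y, hyT, hy⟩ := hE.2 T hTB hc
    refine ⟨y, hyT, ?_⟩
    rintro l (rfl | hl)
    · rw [h.restrictPref_append_of_subset m hTB]
      exact hy m (Set.mem_insert _ _)
    · rw [← restrictPref_restrictPref hTB]
      exact hy _ (Set.mem_insert_of_mem _ (restrictPref_mem_compatPrefs h.subset hl))
  · refine ⟨x T, hxT T hT hc, ?_⟩
    rintro l (rfl | hl)
    · exact h.getLast?_restrictPref_append_ne m hT hc hTB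
    · exact hl.2 T hT hc

end IsBottomTail

theorem isBottomTail_of_getLast? {D : Set (List α)}
    (hxD : ∀ T ⊆ A, T.card = 3 → ∀ l ∈ D, (restrictPref l T).getLast? ≠ some (x T))
    {s : List α} (hBA : B ⊆ A) (hs : s.Nodup) (hsB : s.toFinset = A \ B)
    (hb : ∀ a ∈ s, ∃ l ∈ D, l.getLast? = some a) : IsBottomTail x A B s := by
  refine ⟨hBA, hs, hsB, fun a ha T hT hc haT hxa => ?_⟩
  obtain ⟨l, hl, hla⟩ := hb a ha
  exact hxD T hT hc l hl (hxa ▸ getLast?_restrictPref_of_getLast? hla haT)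

theorem isBottomTail_erase {D : Set (List α)} (hDA : D ⊆ PrefOn A)
    (hxD : ∀ T ⊆ A, T.card = 3 → ∀ l ∈ D, (restrictPref l T).getLast? ≠ some (x T))
    {a : α} (hb : ∃ l ∈ D, l.getLast? = some a) : IsBottomTail x A (A.erase a) [a] := by
  obtain ⟨l, hl, hla⟩ := hb
  have haA : a ∈ A := mem_of_mem_prefOn (hDA hl) (List.mem_of_getLast? hla)
  refine isBottomTail_of_getLast? hxD (A.erase_subset a) (List.nodup_singleton a) ?_ ?_
  · simp [Finset.sdiff_erase_self haA]
  · simpa using ⟨l, hl, hla⟩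

theorem isBottomTail_sdiff_pair {D : Set (List α)} (hDA : D ⊆ PrefOn A)
    (hxD : ∀ T ⊆ A, T.card = 3 → ∀ l ∈ D, (restrictPref l T).getLast? ≠ some (x T))
    {a₁ a₂ : α} (hne : a₁ ≠ a₂) (hb₁ : ∃ l ∈ D, l.getLast? = some a₁)
    (hb₂ : ∃ l ∈ D, l.getLast? = some a₂) : IsBottomTail x A (A \ {a₁, a₂}) [a₂, a₁] := by
  have hmem : ∀ {a}, (∃ l ∈ D, l.getLast? = some a) → a ∈ A := fun ⟨l, hl, hla⟩ =>
    mem_of_mem_prefOn (hDA hl) (List.mem_of_getLast? hla)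
  refine isBottomTail_of_getLast? hxD Finset.sdiff_subset (by simpa using hne.symm) ?_ ?_
  · have hpair : {a₁, a₂} ⊆ A :=
      Finset.insert_subset_iff.mpr ⟨hmem hb₁, Finset.singleton_subset_iff.mpr (hmem hb₂)⟩
    rw [Finset.sdiff_sdiff_eq_self hpair]
    simp [Finset.pair_comm]
  · simpa using ⟨hb₂, hb₁⟩

theorem bottomRestrict_compatPrefs {a : α} (h : IsBottomTail x A (A.erase a) [a]) :
    bottomRestrict A (compatPrefs x A) a = compatPrefs x (A.erase a) := by
  ext m
  rw [← h.exists_append_iff]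
  constructor
  · rintro ⟨l, hl, hla, rfl⟩
    obtain ⟨m', rfl⟩ := List.getLast?_eq_some_iff.mp hla
    exact ⟨m', hl, rfl⟩
  · rintro ⟨m', hl, rfl⟩
    exact ⟨_, hl, List.getLast?_concat, rfl⟩

theorem bottom2Restrict_compatPrefs {a₁ a₂ : α} (hne : a₁ ≠ a₂)
    (h : IsBottomTail x A (A \ {a₁, a₂}) [a₂, a₁]) :
    bottom2Restrict A (compatPrefs x A) a₁ a₂ = compatPrefs x (A \ {a₁, a₂}) := by
  ext m
  rw [← h.exists_append_iff]
  constructor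
  · rintro ⟨l, hl, hla, hl2, rfl⟩
    rw [← PrefOn.length_eq hl.1] at hl2
    obtain ⟨m', rfl⟩ := (List.exists_eq_append_pair_iff hne).mpr ⟨hla, hl2⟩
    exact ⟨m', hl, rfl⟩
  · rintro ⟨m', hl, rfl⟩
    obtain ⟨hla, hl2⟩ := (List.exists_eq_append_pair_iff hne).mp ⟨m', rfl⟩
    rw [PrefOn.length_eq hl.1] at hl2
    exact ⟨_, hl, hla, hl2, rfl⟩

end compatPrefs

theorem maximal_aspd_splitting_general (A : Finset α) (D : Set (List α))
    (hD : IsMaximalASPD A D) (a₁ a₂ : α) (hne : a₁ ≠ a₂)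
    (hb₁ : ∃ l ∈ D, l.getLast? = some a₁) (hb₂ : ∃ l ∈ D, l.getLast? = some a₂) :
    IsMaximalASPD (A.erase a₁) (bottomRestrict A D a₁) ∧
    IsMaximalASPD (A.erase a₂) (bottomRestrict A D a₂) ∧
    IsMaximalASPD (A \ {a₁, a₂}) (bottom2Restrict A D a₁ a₂) ∧
    IsMaximalASPD (A \ {a₁, a₂}) (bottom2Restrict A D a₂ a₁) ∧
    bottom2Restrict A D a₁ a₂ = bottom2Restrict A D a₂ a₁ := by
  have : Nonempty α := ⟨a₁⟩
  choose! x hxT hxD using hD.1.2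
  have h₁ := isBottomTail_erase hD.1.1 hxD hb₁
  have h₂ := isBottomTail_erase hD.1.1 hxD hb₂
  have h₁₂ := isBottomTail_sdiff_pair hD.1.1 hxD hne hb₁ hb₂
  have h₂₁ := isBottomTail_sdiff_pair hD.1.1 hxD hne.symm hb₂ hb₁
  obtain rfl := hD.eq_compatPrefs hxT hxD
  rw [bottomRestrict_compatPrefs h₁, bottomRestrict_compatPrefs h₂,
    bottom2Restrict_compatPrefs hne h₁₂, bottom2Restrict_compatPrefs hne.symm h₂₁,
    Finset.pair_comm a₂ a₁]
  have h₁₂max := h₁₂.isMaximalASPD hD hxT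
  exact ⟨h₁.isMaximalASPD hD hxT, h₂.isMaximalASPD hD hxT, h₁₂max, h₁₂max, rfl⟩

/-- Splitting a maximal Arrow's single-peaked domain `D` on at least three
alternatives at its two bottom alternatives `a₁, a₂`: the domains `D₁`, `D₂`,
`D₁₂`, `D₂₁` are maximal ASPDs on `A ∖ {a₁}`, `A ∖ {a₂}`, `A ∖ {a₁, a₂}` and
`A ∖ {a₁, a₂}` respectively, and `D₁₂ = D₂₁`. -/
theorem maximal_aspd_splitting (A : Finset α) (D : Set (List α))
    (hD : IsMaximalASPD A D) (hA : 3 ≤ A.card) (a₁ a₂ : α) (hne : a₁ ≠ a₂)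
    (hb₁ : ∃ l ∈ D, l.getLast? = some a₁) (hb₂ : ∃ l ∈ D, l.getLast? = some a₂) :
    IsMaximalASPD (A.erase a₁) (bottomRestrict A D a₁) ∧
    IsMaximalASPD (A.erase a₂) (bottomRestrict A D a₂) ∧
    IsMaximalASPD (A \ {a₁, a₂}) (bottom2Restrict A D a₁ a₂) ∧
    IsMaximalASPD (A \ {a₁, a₂}) (bottom2Restrict A D a₂ a₁) ∧
    bottom2Restrict A D a₁ a₂ = bottom2Restrict A D a₂ a₁ :=
  maximal_aspd_splitting_general A D hD a₁ a₂ hne hb₁ hb₂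
end

section
/- Let D be a maximal ASPD on a finite set A with n = |A| ≥ 3 that is also a BSPD (so D is a maximal BSPD), let a_1, a_2 be its two bottom alternatives, and define D_1 := {ω_{A∖{a_1}} : ω ∈ D, ω(n) = a_1}, D_2 := {ω_{A∖{a_2}} : ω ∈ D, ω(n) = a_2}, and D' := {ω_{A∖{a_1,a_2}} : ω ∈ D, ω(n) = a_1, ω(n−1) = a_2}. Then each of D_1, D_2, D' is again a BSPD (and hence, being a maximal ASPD, a maximal BSPD). -/
variable {α : Type*} [DecidableEq α]

/-- Black's single-peaked domain on `A`: there is a societal axis (a path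
graph on `A`, given by an enumeration `p` of `A`) such that whenever `a` lies
on the path from the top alternative of `ω` to `b`, `ω` ranks `a` above `b`. -/
def IsBSPD (A : Finset α) (D : Set (List α)) : Prop :=
  D ⊆ PrefOn A ∧
  ∃ p : List α, p.Nodup ∧ p.toFinset = A ∧
    ∀ l ∈ D, ∀ a ∈ A, ∀ b ∈ A, a ≠ b →
      ∀ h, l.head? = some h →
        ((p.idxOf h ≤ p.idxOf a ∧ p.idxOf a ≤ p.idxOf b) ∨
          (p.idxOf b ≤ p.idxOf a ∧ p.idxOf a ≤ p.idxOf h)) →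
        l.idxOf a < l.idxOf b

/-- Maximal Black's single-peaked domain on `A`. -/
def IsMaximalBSPD (A : Finset α) (D : Set (List α)) : Prop :=
  IsBSPD A D ∧ ∀ l ∈ PrefOn A, l ∉ D → ¬ IsBSPD A (insert l D)

/-!
A Black single-peaked domain with axis `p` lies inside the domain `singlePeakedDomain p` of all
preferences single-peaked along `p`, and that domain is itself Arrow single-peaked: of any three
alternatives, the one in the middle of the axis always beats one of the other two, so it is
never ranked last. Maximality therefore forces `D = singlePeakedDomain p`. For the same reason
only an end of the axis can be ranked last, so after possibly reversing the axis it reads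
`a₂ q a₁`. Removing an end `a` of the axis from the preferences that rank `a` last gives exactly
the single-peaked domain of the shortened axis, and `D'` is obtained by removing `a₁` and then
`a₂`. Finally every `singlePeakedDomain p` is a maximal Black single-peaked domain: a Black
domain containing it lies in some `singlePeakedDomain r` on the same alternatives, and a
relabelling of the alternatives carrying `r` to `p` shows that this domain is no larger.
-/

namespace List

theorem nodup_append_singleton_iff {β : Type*} {l : List β} {a : β} :
    (l ++ [a]).Nodup ↔ a ∉ l ∧ l.Nodup := by
  simpa using nodup_concat l a

theorem exists_eq_append_singleton_of_getLast? {β : Type*} {l : List β} {a : β}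
    (h : l.getLast? = some a) : ∃ k, l = k ++ [a] :=
  ⟨_, (dropLast_append_getLast? a h).symm⟩

theorem exists_eq_cons_append {β : Type*} {p : List β} {a₁ a₂ : β} (hne : a₁ ≠ a₂)
    (h₂ : p.head? = some a₂) (h₁ : p.getLast? = some a₁) :
    ∃ q, p = (a₂ :: q) ++ [a₁] := by
  cases p with
  | nil => simp at h₂
  | cons c t =>
    obtain rfl : c = a₂ := by simpa using h₂
    rcases t.eq_nil_or_concat with rfl | ⟨q, b, rfl⟩
    · exact absurd (by simpa using h₁) hne.symm
    · rw [concat_eq_append, ← cons_append, getLast?_concat, Option.some_inj] at h₁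
      exact ⟨q, by rw [h₁, concat_eq_append, cons_append]⟩

theorem toFinset_append_singleton_erase {l : List α} {a : α} (ha : a ∉ l) :
    (l ++ [a]).toFinset.erase a = l.toFinset := by
  ext x
  by_cases hx : x = a <;> simp [hx, ha]

theorem idxOf_map_of_injective {β : Type*} [DecidableEq β] {f : α → β} (hf : f.Injective)
    (l : List α) (a : α) : (l.map f).idxOf (f a) = l.idxOf a := by
  induction l with
  | nil => rfl
  | cons c t ih => by_cases h : c = a <;> simp [hf.eq_iff, h, ih]

-- Stated additively to avoid truncated subtraction.
theorem Nodup.idxOf_reverse_add {l : List α} (hl : l.Nodup) {x : α} (hx : x ∈ l) :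
    l.reverse.idxOf x + l.idxOf x + 1 = l.length := by
  induction l with
  | nil => simp at hx
  | cons c t ih =>
    rw [nodup_cons] at hl
    by_cases h : c = x
    · subst h
      simp [idxOf_append_of_notMem (mt mem_reverse.1 hl.1)]
    · have hxt : x ∈ t := by simpa [Ne.symm h] using hx
      simp [idxOf_append_of_mem (mem_reverse.2 hxt), idxOf_cons_ne _ h, ← ih hl.2 hxt]
      omega

theorem idxOf_filter_lt_idxOf_filter {l : List α} (P : α → Bool) {x y : α} (hx : P x)
    (h : l.idxOf x < l.idxOf y) : (l.filter P).idxOf x < (l.filter P).idxOf y := by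
  induction l with
  | nil => simp at h
  | cons c t ih =>
    have hcy : c ≠ y := by rintro rfl; simp at h
    by_cases hcx : c = x
    · subst hcx
      simp [hx, idxOf_cons_ne _ hcy]
    · rw [idxOf_cons_ne _ hcx, idxOf_cons_ne _ hcy] at h
      by_cases hc : P c <;> simp [hc, idxOf_cons_ne _ hcx, idxOf_cons_ne _ hcy, ih (by omega)]

theorem Nodup.idxOf_le_idxOf_getLast? {l : List α} (hl : l.Nodup) {x y : α}
    (hy : l.getLast? = some y) (hx : x ∈ l) : l.idxOf x ≤ l.idxOf y := by
  obtain ⟨k, rfl⟩ := exists_eq_append_singleton_of_getLast? hy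
  have hyk := (nodup_append_singleton_iff.1 hl).1
  rw [idxOf_append_of_notMem hyk]
  rcases mem_append.1 hx with hx | hx
  · rw [idxOf_append_of_mem hx]; exact (idxOf_lt_length_iff.2 hx).le.trans (by simp)
  · simp [mem_singleton.1 hx, idxOf_append_of_notMem hyk]

theorem exists_idxOf_lt_idxOf_lt {p : List α} {T : Finset α} (hT : T ⊆ p.toFinset)
    (hcard : T.card = 3) :
    ∃ u ∈ T, ∃ v ∈ T, ∃ w ∈ T, p.idxOf u < p.idxOf v ∧ p.idxOf v < p.idxOf w := by
  obtain ⟨x, y, z, hxy, hxz, hyz, rfl⟩ := Finset.card_eq_three.1 hcard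
  have hx : x ∈ p := mem_toFinset.1 (hT (by simp))
  have hy : y ∈ p := mem_toFinset.1 (hT (by simp))
  rcases Nat.lt_or_gt_of_ne (mt (idxOf_inj hx).1 hxy) with h₁ | h₁ <;>
    rcases Nat.lt_or_gt_of_ne (mt (idxOf_inj hx).1 hxz) with h₂ | h₂ <;>
    rcases Nat.lt_or_gt_of_ne (mt (idxOf_inj hy).1 hyz) with h₃ | h₃
  all_goals first
    | omega
    | exact ⟨x, by simp, y, by simp, z, by simp, ‹_›, ‹_›⟩
    | exact ⟨x, by simp, z, by simp, y, by simp, ‹_›, ‹_›⟩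
    | exact ⟨y, by simp, x, by simp, z, by simp, ‹_›, ‹_›⟩
    | exact ⟨y, by simp, z, by simp, x, by simp, ‹_›, ‹_›⟩
    | exact ⟨z, by simp, x, by simp, y, by simp, ‹_›, ‹_›⟩
    | exact ⟨z, by simp, y, by simp, x, by simp, ‹_›, ‹_›⟩

theorem Nodup.exists_perm_map_eq {p r : List α} (hp : p.Nodup) (hr : r.Nodup)
    (h : p.toFinset = r.toFinset) : ∃ σ : Equiv.Perm α, p.map σ = r := by
  have hmem (x : α) : x ∈ r ↔ x ∈ p := by rw [← mem_toFinset, ← h, mem_toFinset]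
  have hlen : p.length = r.length := by
    rw [← toFinset_card_of_nodup hp, ← toFinset_card_of_nodup hr, h]
  let e : Equiv.Perm {x // x ∈ p} := (hp.getEquiv p).symm.trans <|
    (finCongr hlen).trans <| (hr.getEquiv r).trans (Equiv.subtypeEquivRight hmem)
  refine ⟨Equiv.Perm.ofSubtype e, ext_getElem (by simp [hlen]) fun i hi _ => ?_⟩
  simp [Equiv.Perm.ofSubtype_apply_of_mem, e, hp.idxOf_getElem]

end List

theorem restrictPref_append_singleton_of_notMem {l : List α} {a : α} {T : Finset α}
    (ha : a ∉ T) : restrictPref (l ++ [a]) T = restrictPref l T := by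
  simp [restrictPref, ha]

theorem restrictPref_append_singleton_erase {l : List α} {a : α} (h : (l ++ [a]).Nodup) :
    restrictPref (l ++ [a]) ((l ++ [a]).toFinset.erase a) = l := by
  rw [restrictPref_append_singleton_of_notMem (Finset.notMem_erase a _)]
  have ha := (List.nodup_append_singleton_iff.1 h).1
  exact List.filter_eq_self.2 fun x hx => by
    simp [hx, show x ≠ a by rintro rfl; exact ha hx]

theorem finite_prefOn (A : Finset α) : (PrefOn A).Finite :=
  A.toList.permutations.finite_toSet.subset fun _ hl => List.mem_permutations.2 <|
    List.perm_of_nodup_nodup_toFinset_eq hl.1 A.nodup_toList (by simp [hl.2])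

theorem IsASPD.mono {A : Finset α} {D D' : Set (List α)} (hD : IsASPD A D) (h : D' ⊆ D) :
    IsASPD A D' :=
  ⟨h.trans hD.1, fun T hT hc =>
    let ⟨x, hx, hlast⟩ := hD.2 T hT hc
    ⟨x, hx, fun l hl => hlast l (h hl)⟩⟩

theorem bottom2Restrict_eq_bottomRestrict_bottomRestrict {A : Finset α} {D : Set (List α)}
    (hD : D ⊆ PrefOn A) {a₁ a₂ : α} (hne : a₁ ≠ a₂) :
    bottom2Restrict A D a₁ a₂ =
      bottomRestrict (A.erase a₁) (bottomRestrict A D a₁) a₂ := by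
  have key (k : List α) (hk : k ++ [a₁] ∈ D) :
      ((k ++ [a₁])[A.card - 2]? = some a₂ ↔ k.getLast? = some a₂) ∧
      restrictPref (k ++ [a₁]) (A.erase a₁) = k ∧
      restrictPref (k ++ [a₁]) (A \ {a₁, a₂}) =
        restrictPref k ((A.erase a₁).erase a₂) := by
    obtain ⟨hnd, rfl⟩ := hD hk
    refine ⟨?_, restrictPref_append_singleton_erase hnd, ?_⟩
    · rw [List.toFinset_card_of_nodup hnd]
      rcases k.eq_nil_or_concat with rfl | ⟨k, b, rfl⟩
      · simp [hne]
      · simp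
    · rw [Finset.sdiff_insert, Finset.sdiff_singleton_eq_erase, Finset.erase_right_comm,
        restrictPref_append_singleton_of_notMem (by simp)]
  ext m
  constructor
  · rintro ⟨l, hl, hlast, hsecond, rfl⟩
    obtain ⟨k, rfl⟩ := List.exists_eq_append_singleton_of_getLast? hlast
    obtain ⟨h₂, h₁, h⟩ := key k hl
    exact ⟨k, ⟨_, hl, hlast, h₁.symm⟩, h₂.1 hsecond, h⟩
  · rintro ⟨_, ⟨l, hl, hlast, rfl⟩, hsecond, rfl⟩
    obtain ⟨k, rfl⟩ := List.exists_eq_append_singleton_of_getLast? hlast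
    obtain ⟨h₂, h₁, h⟩ := key k hl
    rw [h₁] at hsecond ⊢
    exact ⟨_, hl, hlast, h₂.2 hsecond, h.symm⟩

def IsSinglePeaked (p l : List α) : Prop :=
  ∀ a ∈ p, ∀ b ∈ p, a ≠ b → ∀ h, l.head? = some h →
    ((p.idxOf h ≤ p.idxOf a ∧ p.idxOf a ≤ p.idxOf b) ∨
      (p.idxOf b ≤ p.idxOf a ∧ p.idxOf a ≤ p.idxOf h)) →
    l.idxOf a < l.idxOf b

def singlePeakedDomain (p : List α) : Set (List α) :=
  {l | l ∈ PrefOn p.toFinset ∧ IsSinglePeaked p l}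

theorem IsBSPD.exists_subset_singlePeakedDomain {A : Finset α} {D : Set (List α)}
    (hD : IsBSPD A D) :
    ∃ p : List α, p.Nodup ∧ p.toFinset = A ∧ D ⊆ singlePeakedDomain p := by
  obtain ⟨hsub, p, hp, rfl, hsp⟩ := hD
  exact ⟨p, hp, rfl, fun l hl => ⟨hsub hl, fun a ha b hb =>
    hsp l hl a (List.mem_toFinset.2 ha) b (List.mem_toFinset.2 hb)⟩⟩

namespace singlePeakedDomain

variable {p l : List α}

theorem finite (p : List α) : (singlePeakedDomain p).Finite :=
  (finite_prefOn p.toFinset).subset fun _ hl => hl.1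

theorem mem_iff (hl : l ∈ singlePeakedDomain p) {x : α} : x ∈ l ↔ x ∈ p := by
  rw [← List.mem_toFinset, hl.1.2, List.mem_toFinset]

theorem isBSPD (hp : p.Nodup) : IsBSPD p.toFinset (singlePeakedDomain p) :=
  ⟨fun _ hl => hl.1, p, hp, rfl, fun _ hl a ha b hb =>
    hl.2 a (List.mem_toFinset.1 ha) b (List.mem_toFinset.1 hb)⟩

theorem idxOf_middle_lt (hl : l ∈ singlePeakedDomain p) {u v w : α} (hu : u ∈ p) (hv : v ∈ p)
    (hw : w ∈ p) (huv : p.idxOf u < p.idxOf v) (hvw : p.idxOf v < p.idxOf w) :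
    l.idxOf v < l.idxOf u ∨ l.idxOf v < l.idxOf w := by
  obtain ⟨h, hh⟩ : ∃ h, l.head? = some h := by
    cases l with
    | nil => exact absurd ((mem_iff hl).2 hv) List.not_mem_nil
    | cons c t => exact ⟨c, rfl⟩
  have hvw' : v ≠ w := ne_of_apply_ne (List.idxOf · p) hvw.ne
  have hvu : v ≠ u := ne_of_apply_ne (List.idxOf · p) huv.ne'
  rcases le_total (p.idxOf h) (p.idxOf v) with hc | hc
  · exact .inr <| hl.2 v hv w hw hvw' h hh (.inl ⟨hc, hvw.le⟩)
  · exact .inl <| hl.2 v hv u hu hvu h hh (.inr ⟨huv.le, hc⟩)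

theorem getLast?_restrictPref_ne (hl : l ∈ singlePeakedDomain p) {u v w : α} (hu : u ∈ p)
    (hv : v ∈ p) (hw : w ∈ p) (huv : p.idxOf u < p.idxOf v) (hvw : p.idxOf v < p.idxOf w)
    {T : Finset α} (huT : u ∈ T) (hvT : v ∈ T) (hwT : w ∈ T) :
    (restrictPref l T).getLast? ≠ some v := by
  intro hlast
  have hbeaten {x : α} (hx : x ∈ p) (hxT : x ∈ T) (h : l.idxOf v < l.idxOf x) : False := by
    have := List.idxOf_filter_lt_idxOf_filter (fun a => decide (a ∈ T)) (decide_eq_true hvT) h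
    have := (hl.1.1.filter _).idxOf_le_idxOf_getLast? hlast
      (List.mem_filter.2 ⟨(mem_iff hl).2 hx, decide_eq_true hxT⟩)
    simp only [restrictPref] at *
    omega
  rcases idxOf_middle_lt hl hu hv hw huv hvw with h | h
  exacts [hbeaten hu huT h, hbeaten hw hwT h]

theorem isASPD : IsASPD p.toFinset (singlePeakedDomain p) := by
  refine ⟨fun _ hl => hl.1, fun T hT hcard => ?_⟩
  obtain ⟨u, hu, v, hv, w, hw, huv, hvw⟩ := List.exists_idxOf_lt_idxOf_lt hT hcard
  have hp {x : α} (hx : x ∈ T) : x ∈ p := List.mem_toFinset.1 (hT hx)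
  exact ⟨v, hv, fun l hl =>
    getLast?_restrictPref_ne hl (hp hu) (hp hv) (hp hw) huv hvw hu hv hw⟩

theorem _root_.IsMaximalASPD.eq_singlePeakedDomain {D : Set (List α)}
    (hD : IsMaximalASPD p.toFinset D) (hsub : D ⊆ singlePeakedDomain p) :
    D = singlePeakedDomain p := by
  refine hsub.antisymm fun l hl => ?_
  by_contra hlD
  exact hD.2 l hl.1 hlD (isASPD.mono (Set.insert_subset hl hsub))

theorem subset_reverse (hp : p.Nodup) :
    singlePeakedDomain p ⊆ singlePeakedDomain p.reverse := by
  intro l hl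
  refine ⟨by simpa [PrefOn] using hl.1, fun a ha b hb hab h hh hbtw => ?_⟩
  rw [List.mem_reverse] at ha hb
  have hhp : h ∈ p := (mem_iff hl).1 (List.mem_of_mem_head? hh)
  have := hp.idxOf_reverse_add ha
  have := hp.idxOf_reverse_add hb
  have := hp.idxOf_reverse_add hhp
  exact hl.2 a ha b hb hab h hh (by omega)

theorem reverse_eq (hp : p.Nodup) : singlePeakedDomain p.reverse = singlePeakedDomain p := by
  refine Set.Subset.antisymm ?_ (subset_reverse hp)
  simpa using subset_reverse (List.nodup_reverse.2 hp)

theorem exists_idxOf_lt_of_head?_ne {y : α} (hy : y ∈ p) (h : p.head? ≠ some y) :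
    ∃ x ∈ p, p.idxOf x < p.idxOf y := by
  cases p with
  | nil => exact absurd hy List.not_mem_nil
  | cons c t =>
    have hcy : c ≠ y := fun hcy => h (by simp [hcy])
    exact ⟨c, List.mem_cons_self, by simp [List.idxOf_cons_ne _ hcy]⟩

theorem head?_or_getLast?_eq (hp : p.Nodup) (hl : l ∈ singlePeakedDomain p) {y : α}
    (hy : l.getLast? = some y) : p.head? = some y ∨ p.getLast? = some y := by
  have hyp : y ∈ p := (mem_iff hl).1 (List.mem_of_getLast? hy)
  by_contra! h
  obtain ⟨x, hx, hxy⟩ := exists_idxOf_lt_of_head?_ne hyp h.1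
  obtain ⟨z, hz, hzy⟩ := exists_idxOf_lt_of_head?_ne (List.mem_reverse.2 hyp)
    (by simpa using h.2)
  rw [List.mem_reverse] at hz
  have := hp.idxOf_reverse_add hyp
  have := hp.idxOf_reverse_add hz
  have hlast {w : α} (hw : w ∈ p) := hl.1.1.idxOf_le_idxOf_getLast? hy ((mem_iff hl).2 hw)
  rcases idxOf_middle_lt hl hx hyp hz hxy (by omega) with h | h
  exacts [absurd (hlast hx) (by omega), absurd (hlast hz) (by omega)]

theorem exists_axis_eq_cons_append (hp : p.Nodup) {a₁ a₂ : α} (hne : a₁ ≠ a₂)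
    (h₁ : ∃ l ∈ singlePeakedDomain p, l.getLast? = some a₁)
    (h₂ : ∃ l ∈ singlePeakedDomain p, l.getLast? = some a₂) :
    ∃ q, ((a₂ :: q) ++ [a₁]).Nodup ∧ ((a₂ :: q) ++ [a₁]).toFinset = p.toFinset ∧
      singlePeakedDomain ((a₂ :: q) ++ [a₁]) = singlePeakedDomain p := by
  obtain ⟨l₁, hl₁, hlast₁⟩ := h₁
  obtain ⟨l₂, hl₂, hlast₂⟩ := h₂
  rcases head?_or_getLast?_eq hp hl₁ hlast₁ with e₁ | e₁ <;>
    rcases head?_or_getLast?_eq hp hl₂ hlast₂ with e₂ | e₂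
  · exact absurd (Option.some_inj.1 (e₁.symm.trans e₂)) hne
  · obtain ⟨q, hq⟩ := List.exists_eq_cons_append (p := p.reverse) hne
      (by rwa [List.head?_reverse]) (by rwa [List.getLast?_reverse])
    exact ⟨q, hq ▸ List.nodup_reverse.2 hp, by rw [← hq, List.toFinset_reverse],
      by rw [← hq, reverse_eq hp]⟩
  · obtain ⟨q, rfl⟩ := List.exists_eq_cons_append hne e₂ e₁
    exact ⟨q, hp, rfl, rfl⟩
  · exact absurd (Option.some_inj.1 (e₁.symm.trans e₂)) hne

theorem map_mem {β : Type*} [DecidableEq β] {f : α → β} (hf : f.Injective)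
    (hl : l ∈ singlePeakedDomain p) : l.map f ∈ singlePeakedDomain (p.map f) := by
  refine ⟨⟨hl.1.1.map hf, by ext; simp [mem_iff hl]⟩, ?_⟩
  intro a ha b hb hab h hh hbtw
  obtain ⟨a, ha', rfl⟩ := List.mem_map.1 ha
  obtain ⟨b, hb', rfl⟩ := List.mem_map.1 hb
  rw [List.head?_map, Option.map_eq_some_iff] at hh
  obtain ⟨h, hh', rfl⟩ := hh
  simp only [List.idxOf_map_of_injective hf] at hbtw ⊢
  exact hl.2 a ha' b hb' (ne_of_apply_ne f hab) h hh' hbtw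

theorem eq_of_subset {r : List α} (hp : p.Nodup) (hr : r.Nodup) (h : p.toFinset = r.toFinset)
    (hsub : singlePeakedDomain p ⊆ singlePeakedDomain r) :
    singlePeakedDomain p = singlePeakedDomain r := by
  obtain ⟨σ, hσ⟩ := hr.exists_perm_map_eq hp h.symm
  refine Set.eq_of_subset_of_ncard_le hsub ?_ (finite r)
  calc (singlePeakedDomain r).ncard
      = (List.map σ '' singlePeakedDomain r).ncard :=
        (Set.ncard_image_of_injective _ (List.map_injective_iff.2 σ.injective)).symm
    _ ≤ (singlePeakedDomain p).ncard :=
        Set.ncard_le_ncard (by rintro _ ⟨l, hl, rfl⟩; exact hσ ▸ map_mem σ.injective hl)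
          (finite p)

theorem isMaximalBSPD (hp : p.Nodup) : IsMaximalBSPD p.toFinset (singlePeakedDomain p) := by
  refine ⟨isBSPD hp, fun l _ hl hB => ?_⟩
  obtain ⟨r, hr, hrp, hsub⟩ := hB.exists_subset_singlePeakedDomain
  rw [eq_of_subset hp hr hrp.symm ((Set.subset_insert l _).trans hsub)] at hl
  exact hl (hsub (Set.mem_insert l _))

theorem append_singleton_mem_prefOn_iff {t m : List α} {a : α} (ha : a ∉ t) :
    m ++ [a] ∈ PrefOn (t ++ [a]).toFinset ↔ m ∈ PrefOn t.toFinset := by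
  constructor
  · rintro ⟨hnd, hfin⟩
    obtain ⟨ham, hm⟩ := List.nodup_append_singleton_iff.1 hnd
    refine ⟨hm, ?_⟩
    rw [← List.toFinset_append_singleton_erase ha, ← hfin,
      List.toFinset_append_singleton_erase ham]
  · rintro ⟨hm, hfin⟩
    have ham : a ∉ m := by rwa [← List.mem_toFinset, hfin, List.mem_toFinset]
    exact ⟨List.nodup_append_singleton_iff.2 ⟨ham, hm⟩,
      by simp [List.toFinset_append, hfin]⟩

theorem append_singleton_mem_iff {t m : List α} {a : α} (ha : a ∉ t) :
    m ++ [a] ∈ singlePeakedDomain (t ++ [a]) ↔ m ∈ singlePeakedDomain t := by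
  refine (and_congr_left' (append_singleton_mem_prefOn_iff ha)).trans
    (and_congr_right fun hm => ?_)
  have hmem (x : α) : x ∈ m ↔ x ∈ t := by
    rw [← List.mem_toFinset, hm.2, List.mem_toFinset]
  have ham : a ∉ m := by rwa [hmem]
  constructor
  · intro hl x hx y hy hxy h hh hbtw
    have hht : h ∈ t := (hmem h).1 (List.mem_of_mem_head? hh)
    have := hl x (by simp [hx]) y (by simp [hy]) hxy h (by simp [hh])
      (by simpa [List.idxOf_append_of_mem, hx, hy, hht] using hbtw)
    simpa [List.idxOf_append_of_mem, (hmem _).2 hx, (hmem _).2 hy] using this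
  · intro hl x hx y hy hxy h hh hbtw
    cases m with
    | nil =>
      obtain rfl : t = [] := by simpa using hm.2.symm
      simp_all
    | cons c k =>
      obtain rfl : c = h := by simpa using hh
      have hht : c ∈ t := (hmem c).1 List.mem_cons_self
      have hct := List.idxOf_lt_length_iff.2 hht
      rw [List.mem_append, List.mem_singleton] at hx hy
      rcases hx with hx | rfl <;> rcases hy with hy | rfl
      · rw [List.idxOf_append_of_mem hx, List.idxOf_append_of_mem hy,
          List.idxOf_append_of_mem hht] at hbtw
        rw [List.idxOf_append_of_mem ((hmem x).2 hx), List.idxOf_append_of_mem ((hmem y).2 hy)]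
        exact hl x hx y hy hxy c rfl hbtw
      · have hxm := (hmem x).2 hx
        rw [List.idxOf_append_of_mem hxm, List.idxOf_append_of_notMem ham,
          List.idxOf_cons_self, add_zero]
        exact List.idxOf_lt_length_iff.2 hxm
      · rw [List.idxOf_append_of_notMem ha, List.idxOf_append_of_mem hy,
          List.idxOf_append_of_mem hht, List.idxOf_cons_self, add_zero] at hbtw
        have := List.idxOf_lt_length_iff.2 hy
        omega
      · exact absurd rfl hxy

theorem bottomRestrict_append_singleton {t : List α} {a : α} (h : (t ++ [a]).Nodup) :
    bottomRestrict (t ++ [a]).toFinset (singlePeakedDomain (t ++ [a])) a =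
      singlePeakedDomain t := by
  have ha := (List.nodup_append_singleton_iff.1 h).1
  ext m
  constructor
  · rintro ⟨l, hl, hlast, rfl⟩
    obtain ⟨k, rfl⟩ := List.exists_eq_append_singleton_of_getLast? hlast
    rw [← hl.1.2, restrictPref_append_singleton_erase hl.1.1]
    exact (append_singleton_mem_iff ha).1 hl
  · intro hm
    have hl := (append_singleton_mem_iff ha).2 hm
    exact ⟨m ++ [a], hl, List.getLast?_concat,
      by rw [← hl.1.2, restrictPref_append_singleton_erase hl.1.1]⟩

theorem isMaximalBSPD_bottomRestrict (hp : p.Nodup) {a : α}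
    (ha : p.head? = some a ∨ p.getLast? = some a) :
    IsMaximalBSPD (p.toFinset.erase a) (bottomRestrict p.toFinset (singlePeakedDomain p) a) := by
  wlog hlast : p.getLast? = some a generalizing p
  · have := this (List.nodup_reverse.2 hp) (by simpa [or_comm] using ha)
      (by simpa [hlast] using ha)
    rwa [List.toFinset_reverse, reverse_eq hp] at this
  obtain ⟨t, rfl⟩ := List.exists_eq_append_singleton_of_getLast? hlast
  obtain ⟨ha, ht⟩ := List.nodup_append_singleton_iff.1 hp
  rw [bottomRestrict_append_singleton hp, List.toFinset_append_singleton_erase ha]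
  exact isMaximalBSPD ht

theorem isMaximalBSPD_bottom2Restrict {q : List α} {a₁ a₂ : α}
    (h : ((a₂ :: q) ++ [a₁]).Nodup) :
    IsMaximalBSPD (((a₂ :: q) ++ [a₁]).toFinset \ {a₁, a₂})
      (bottom2Restrict ((a₂ :: q) ++ [a₁]).toFinset (singlePeakedDomain ((a₂ :: q) ++ [a₁]))
        a₁ a₂) := by
  obtain ⟨ha₁, hq⟩ := List.nodup_append_singleton_iff.1 h
  rw [bottom2Restrict_eq_bottomRestrict_bottomRestrict (fun _ hl => hl.1)
      (by rintro rfl; simp at ha₁),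
    Finset.sdiff_insert, Finset.sdiff_singleton_eq_erase, Finset.erase_right_comm,
    bottomRestrict_append_singleton h, List.toFinset_append_singleton_erase ha₁]
  exact isMaximalBSPD_bottomRestrict hq (.inl rfl)

end singlePeakedDomain

theorem maximal_bspd_splitting_general (A : Finset α) (D : Set (List α))
    (hD : IsMaximalASPD A D) (hB : IsBSPD A D)
    (a₁ a₂ : α) (hne : a₁ ≠ a₂)
    (hb₁ : ∃ l ∈ D, l.getLast? = some a₁) (hb₂ : ∃ l ∈ D, l.getLast? = some a₂) :
    IsBSPD (A.erase a₁) (bottomRestrict A D a₁) ∧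
    IsBSPD (A.erase a₂) (bottomRestrict A D a₂) ∧
    IsBSPD (A \ {a₁, a₂}) (bottom2Restrict A D a₁ a₂) ∧
    IsMaximalBSPD (A.erase a₁) (bottomRestrict A D a₁) ∧
    IsMaximalBSPD (A.erase a₂) (bottomRestrict A D a₂) ∧
    IsMaximalBSPD (A \ {a₁, a₂}) (bottom2Restrict A D a₁ a₂) := by
  obtain ⟨p, hp, rfl, hDp⟩ := hB.exists_subset_singlePeakedDomain
  obtain rfl := hD.eq_singlePeakedDomain hDp
  obtain ⟨q, hq, hqp, hqD⟩ := singlePeakedDomain.exists_axis_eq_cons_append hp hne hb₁ hb₂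
  rw [← hqp, ← hqD]
  have M₁ := singlePeakedDomain.isMaximalBSPD_bottomRestrict hq (.inr List.getLast?_concat)
  have M₂ := singlePeakedDomain.isMaximalBSPD_bottomRestrict hq (a := a₂) (.inl rfl)
  have M' := singlePeakedDomain.isMaximalBSPD_bottom2Restrict hq
  exact ⟨M₁.1, M₂.1, M'.1, M₁, M₂, M'⟩

/-- Splitting a maximal Black's single-peaked domain: the domains `D₁`, `D₂`,
and `D'` obtained by splitting at the two bottom alternatives are again
(maximal) Black's single-peaked domains. -/
theorem maximal_bspd_splitting (A : Finset α) (D : Set (List α))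
    (hD : IsMaximalASPD A D) (hB : IsBSPD A D) (hA : 3 ≤ A.card)
    (a₁ a₂ : α) (hne : a₁ ≠ a₂)
    (hb₁ : ∃ l ∈ D, l.getLast? = some a₁) (hb₂ : ∃ l ∈ D, l.getLast? = some a₂) :
    IsBSPD (A.erase a₁) (bottomRestrict A D a₁) ∧
    IsBSPD (A.erase a₂) (bottomRestrict A D a₂) ∧
    IsBSPD (A \ {a₁, a₂}) (bottom2Restrict A D a₁ a₂) ∧
    IsMaximalBSPD (A.erase a₁) (bottomRestrict A D a₁) ∧
    IsMaximalBSPD (A.erase a₂) (bottomRestrict A D a₂) ∧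
    IsMaximalBSPD (A \ {a₁, a₂}) (bottom2Restrict A D a₁ a₂) :=
  maximal_bspd_splitting_general A D hD hB a₁ a₂ hne hb₁ hb₂
end
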